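/- arXiv:2012.06421 — 2 statements merged into one kernel-verified Lean document; each statement's English description precedes it below -/
import Mathlib

section
/- Let X be uniform on {0,1}^d and X' obtained from X by flipping each bit independently with probability (1-ρ)/2. For any set A ⊆ {0,1}^d, Pr[X ∈ A and X' ∈ A] ≤ (|A| · 2^{-d})^{2/(1+ρ)}. -/
open Finset Real Filter
open scoped Classical Topology

section Preamble

variable {Ω : Type*} [Fintype Ω]

/-- Probability of an event under a pmf on a finite sample space. -/
noncomputable def prEvent (p : Ω → ℝ) (s : Ω → Prop) : ℝ :=
  ∑ ω, if s ω then p ω else 0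

/-- Probability that a random variable takes a given value. -/
noncomputable def prEq {α : Type*} (p : Ω → ℝ) (X : Ω → α) (x : α) : ℝ :=
  prEvent p (fun ω => X ω = x)

/-- Shannon entropy (in bits) of a finite random variable. -/
noncomputable def entropy {α : Type*} [Fintype α] (p : Ω → ℝ) (X : Ω → α) : ℝ :=
  -∑ x, prEq p X x * Real.logb 2 (prEq p X x)

/-- Mutual information (in bits) between two finite random variables. -/
noncomputable def mutInfo {α β : Type*} [Fintype α] [Fintype β]
    (p : Ω → ℝ) (X : Ω → α) (Y : Ω → β) : ℝ :=
  entropy p X + entropy p Y - entropy p (fun ω => (X ω, Y ω))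

/-- Conditional pmf given an event. -/
noncomputable def condPMF (p : Ω → ℝ) (s : Ω → Prop) : Ω → ℝ :=
  fun ω => (if s ω then p ω else 0) / prEvent p s

/-- Conditional mutual information I(X;Y | W). -/
noncomputable def condMutInfo {α β γ : Type*} [Fintype α] [Fintype β] [Fintype γ]
    (p : Ω → ℝ) (X : Ω → α) (Y : Ω → β) (W : Ω → γ) : ℝ :=
  ∑ w, prEq p W w * mutInfo (condPMF p (fun ω => W ω = w)) X Y

/-- `p` is a probability mass function. -/
def IsPMF (p : Ω → ℝ) : Prop := (∀ ω, 0 ≤ p ω) ∧ ∑ ω, p ω = 1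

/-- Binary entropy function (in bits). -/
noncomputable def binEnt (x : ℝ) : ℝ :=
  -(x * Real.logb 2 x) - (1 - x) * Real.logb 2 (1 - x)

end Preamble



private lemma aux_g_nonneg {p : ℝ} (hp1 : 1 < p) (hp2 : p ≤ 2) {s : ℝ}
    (hs0 : 0 ≤ s) (hs1 : s ≤ 1) :
    0 ≤ (1+s)^(p-1) - (1-s)^(p-1) - 2*(p-1)*s := by
  have hq : (0:ℝ) < p - 1 := by linarith
  set g : ℝ → ℝ := fun s => (1+s)^(p-1) - (1-s)^(p-1) - 2*(p-1)*s with hgdef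
  have hderiv : ∀ x ∈ Set.Ioo (0:ℝ) 1,
      HasDerivAt g ((p-1)*(1+x)^(p-2) + (p-1)*(1-x)^(p-2) - 2*(p-1)) x := by
    intro x hx
    have h1x : (0:ℝ) < 1 + x := by linarith [hx.1]
    have h2x : (0:ℝ) < 1 - x := by linarith [hx.2]
    have hd1 : HasDerivAt (fun s : ℝ => (1+s)^(p-1)) ((p-1)*(1+x)^(p-2)) x := by
      have h := (Real.hasDerivAt_rpow_const (x := 1+x) (p := p-1) (Or.inl h1x.ne')).comp x
        ((hasDerivAt_id x).const_add 1)
      have he : p - 1 - 1 = p - 2 := by ring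
      simpa [he, Function.comp_def] using h
    have hd2 : HasDerivAt (fun s : ℝ => (1-s)^(p-1)) (-((p-1)*(1-x)^(p-2))) x := by
      have h := (Real.hasDerivAt_rpow_const (x := 1-x) (p := p-1) (Or.inl h2x.ne')).comp x
        ((hasDerivAt_id x).const_sub 1)
      have he : p - 1 - 1 = p - 2 := by ring
      simpa [he, Function.comp_def] using h
    have hd3 : HasDerivAt (fun s : ℝ => 2*(p-1)*s) (2*(p-1)) x := by
      simpa using (hasDerivAt_id x).const_mul (2*(p-1))
    have := (hd1.sub hd2).sub hd3
    exact this.congr_deriv (by ring)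
  have hcont : ContinuousOn g (Set.Icc 0 1) := by
    apply ContinuousOn.sub
    apply ContinuousOn.sub
    · exact ((continuous_const.add continuous_id).continuousOn).rpow_const
        (fun x _ => Or.inr hq.le)
    · exact ((continuous_const.sub continuous_id).continuousOn).rpow_const
        (fun x _ => Or.inr hq.le)
    · exact (continuous_const.mul continuous_id).continuousOn
  have hmono : MonotoneOn g (Set.Icc 0 1) := by
    apply monotoneOn_of_deriv_nonneg (convex_Icc 0 1) hcont
    · rw [interior_Icc]
      intro x hx
      exact (hderiv x hx).differentiableAt.differentiableWithinAt
    · rw [interior_Icc]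
      intro x hx
      rw [(hderiv x hx).deriv]
      have h1x : (0:ℝ) < 1 + x := by linarith [hx.1]
      have h2x : (0:ℝ) < 1 - x := by linarith [hx.2]
      set u : ℝ := (1+x)^(p-2) with hu
      set v : ℝ := (1-x)^(p-2) with hv
      have hupos : 0 < u := Real.rpow_pos_of_pos h1x _
      have hvpos : 0 < v := Real.rpow_pos_of_pos h2x _
      have huv : 1 ≤ u * v := by
        rw [hu, hv, ← Real.mul_rpow h1x.le h2x.le]
        apply Real.one_le_rpow_of_pos_of_le_one_of_nonpos
        · nlinarith [hx.1, hx.2]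
        · nlinarith [hx.1, hx.2]
        · linarith
      have huv2 : 2 ≤ u + v := by nlinarith [sq_nonneg (u - v)]
      nlinarith
  have h0 : g 0 = 0 := by simp [hgdef]
  have := hmono (Set.left_mem_Icc.mpr zero_le_one) ⟨hs0, hs1⟩ hs0
  rw [h0] at this
  simpa [hgdef] using this

private lemma aux_f_nonneg {p : ℝ} (hp1 : 1 ≤ p) (hp2 : p ≤ 2) {s : ℝ}
    (hs0 : 0 ≤ s) (hs1 : s ≤ 1) :
    1 + p*(p-1)/2 * s^2 ≤ ((1+s)^p + (1-s)^p)/2 := by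
  rcases eq_or_lt_of_le hp1 with rfl | hp1
  · simp only [sub_self, mul_zero, zero_mul, zero_div, add_zero, Real.rpow_one]
    norm_num
  have hppos : (0:ℝ) < p := by linarith
  set f : ℝ → ℝ := fun s => ((1+s)^p + (1-s)^p)/2 - 1 - p*(p-1)/2 * s^2 with hfdef
  have hderiv : ∀ x ∈ Set.Ioo (0:ℝ) 1,
      HasDerivAt f (p/2 * ((1+x)^(p-1) - (1-x)^(p-1) - 2*(p-1)*x)) x := by
    intro x hx
    have h1x : (0:ℝ) < 1 + x := by linarith [hx.1]
    have h2x : (0:ℝ) < 1 - x := by linarith [hx.2]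
    have hd1 : HasDerivAt (fun s : ℝ => (1+s)^p) (p*(1+x)^(p-1)) x := by
      simpa [Function.comp_def] using (Real.hasDerivAt_rpow_const (x := 1+x) (p := p) (Or.inl h1x.ne')).comp x
        ((hasDerivAt_id x).const_add 1)
    have hd2 : HasDerivAt (fun s : ℝ => (1-s)^p) (-(p*(1-x)^(p-1))) x := by
      simpa [Function.comp_def] using (Real.hasDerivAt_rpow_const (x := 1-x) (p := p) (Or.inl h2x.ne')).comp x
        ((hasDerivAt_id x).const_sub 1)
    have hd3 : HasDerivAt (fun s : ℝ => p*(p-1)/2 * s^2) (p*(p-1)/2 * (2*x)) x := by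
      simpa using ((hasDerivAt_pow 2 x).const_mul (p*(p-1)/2))
    have := (((hd1.add hd2).div_const 2).sub_const 1).sub hd3
    exact this.congr_deriv (by ring)
  have hcont : ContinuousOn f (Set.Icc 0 1) := by
    apply ContinuousOn.sub
    apply ContinuousOn.sub
    · apply ContinuousOn.div_const
      apply ContinuousOn.add
      · exact ((continuous_const.add continuous_id).continuousOn).rpow_const
          (fun x _ => Or.inr hppos.le)
      · exact ((continuous_const.sub continuous_id).continuousOn).rpow_const
          (fun x _ => Or.inr hppos.le)
    · exact continuousOn_const
    · exact (continuous_const.mul (continuous_pow 2)).continuousOn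
  have hmono : MonotoneOn f (Set.Icc 0 1) := by
    apply monotoneOn_of_deriv_nonneg (convex_Icc 0 1) hcont
    · rw [interior_Icc]
      intro x hx
      exact (hderiv x hx).differentiableAt.differentiableWithinAt
    · rw [interior_Icc]
      intro x hx
      rw [(hderiv x hx).deriv]
      have := aux_g_nonneg hp1 hp2 hx.1.le hx.2.le
      positivity
  have h0 : f 0 = 0 := by simp [hfdef]
  have := hmono (Set.left_mem_Icc.mpr zero_le_one) ⟨hs0, hs1⟩ hs0
  rw [h0] at this
  simp only [hfdef] at this
  linarith

private lemma two_point_single' {ρ : ℝ} (hρ0 : 0 ≤ ρ) (hρ1 : ρ ≤ 1) {a b : ℝ}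
    (hb : 0 ≤ b) (hba : b ≤ a) :
    ((a+b)/2)^2 + ρ * ((a-b)/2)^2 ≤ ((a^(1+ρ) + b^(1+ρ))/2) ^ (2/(1+ρ)) := by
  have ha : 0 ≤ a := hb.trans hba
  have hppos : (0:ℝ) < 1+ρ := by linarith
  rcases eq_or_lt_of_le (by linarith : (0:ℝ) ≤ a + b) with h0 | hab
  · have ha0 : a = 0 := by linarith
    have hb0 : b = 0 := by linarith
    subst ha0; subst hb0
    rw [Real.zero_rpow hppos.ne']
    norm_num
    rw [Real.zero_rpow (by positivity : 2/(1+ρ) ≠ 0)]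
  · set p := 1 + ρ with hpdef
    have hp1 : 1 ≤ p := by rw [hpdef]; linarith
    have hp2 : p ≤ 2 := by rw [hpdef]; linarith
    set s : ℝ := (a-b)/(a+b) with hsdef
    have hs0 : 0 ≤ s := div_nonneg (by linarith) hab.le
    have hs1 : s ≤ 1 := by rw [hsdef, div_le_one hab]; linarith
    have hμ : (0:ℝ) < (a+b)/2 := by linarith
    have h1s : 1 + s = a / ((a+b)/2) := by
      rw [hsdef]; field_simp; ring
    have h2s : 1 - s = b / ((a+b)/2) := by
      rw [hsdef]; field_simp; ring
    have key := aux_f_nonneg hp1 hp2 hs0 hs1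
    rw [h1s, h2s, Real.div_rpow ha hμ.le, Real.div_rpow hb hμ.le] at key
    have hμp : (0:ℝ) < ((a+b)/2)^p := Real.rpow_pos_of_pos hμ _
    have hbern : (1 + ρ*s^2)^(p/2) ≤ 1 + p*(p-1)/2*s^2 := by
      have h := rpow_one_add_le_one_add_mul_self
        (s := ρ*s^2) (by have := mul_nonneg hρ0 (sq_nonneg s); linarith : (-1:ℝ) ≤ ρ*s^2)
        (by linarith : (0:ℝ) ≤ p/2) (by linarith : p/2 ≤ 1)
      have heq : 1 + p/2*(ρ*s^2) = 1 + p*(p-1)/2*s^2 := by rw [hpdef]; ring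
      linarith [h, heq.ge]
    have hchain : (1 + ρ*s^2)^(p/2) ≤ (a^p + b^p)/2 / ((a+b)/2)^p := by
      have : (a^p/((a+b)/2)^p + b^p/((a+b)/2)^p)/2 = (a^p + b^p)/2 / ((a+b)/2)^p := by
        ring
      linarith [hbern, key, this.ge]
    have hLnn : (0:ℝ) ≤ 1 + ρ*s^2 := by positivity
    have hfin := Real.rpow_le_rpow (Real.rpow_nonneg hLnn _) hchain
      (by positivity : (0:ℝ) ≤ 2/p)
    rw [← Real.rpow_mul hLnn] at hfin
    have hone : p/2*(2/p) = 1 := by field_simp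
    rw [hone, Real.rpow_one] at hfin
    rw [Real.div_rpow (by positivity) hμp.le] at hfin
    rw [← Real.rpow_mul hμ.le] at hfin
    have h2 : p*(2/p) = 2 := by field_simp
    rw [h2, show ((a+b)/2)^(2:ℝ) = ((a+b)/2)^2 by
      rw [show (2:ℝ) = ((2:ℕ):ℝ) by norm_num, Real.rpow_natCast]] at hfin
    have hms : (a-b)/2 = ((a+b)/2) * s := by
      rw [hsdef]; field_simp
    have hfin2 := (le_div_iff₀ (by positivity : (0:ℝ) < ((a+b)/2)^2)).mp hfin
    calc ((a+b)/2)^2 + ρ * ((a-b)/2)^2 = (1 + ρ*s^2) * ((a+b)/2)^2 := by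
          rw [hms]; ring
    _ ≤ ((a^p + b^p)/2)^(2/p) := hfin2

private lemma two_point_single {ρ : ℝ} (hρ0 : 0 ≤ ρ) (hρ1 : ρ ≤ 1) {a b : ℝ}
    (ha : 0 ≤ a) (hb : 0 ≤ b) :
    ((a+b)/2)^2 + ρ * ((a-b)/2)^2 ≤ ((a^(1+ρ) + b^(1+ρ))/2) ^ (2/(1+ρ)) := by
  rcases le_total b a with h | h
  · exact two_point_single' hρ0 hρ1 hb h
  · calc ((a+b)/2)^2 + ρ*((a-b)/2)^2 = ((b+a)/2)^2 + ρ*((b-a)/2)^2 := by ring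
    _ ≤ ((b^(1+ρ)+a^(1+ρ))/2)^(2/(1+ρ)) := two_point_single' hρ0 hρ1 ha h
    _ = ((a^(1+ρ)+b^(1+ρ))/2)^(2/(1+ρ)) := by rw [add_comm]

private lemma two_point {ρ : ℝ} (hρ0 : 0 ≤ ρ) (hρ1 : ρ ≤ 1) {x0 x1 y0 y1 : ℝ}
    (hx0 : 0 ≤ x0) (hx1 : 0 ≤ x1) (hy0 : 0 ≤ y0) (hy1 : 0 ≤ y1) :
    (1+ρ)/2 * ((x0*y0 + x1*y1)/2) + (1-ρ)/2 * ((x0*y1 + x1*y0)/2) ≤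
      (((x0^(1+ρ)+x1^(1+ρ))/2) * ((y0^(1+ρ)+y1^(1+ρ))/2)) ^ (1/(1+ρ)) := by
  have hppos : (0:ℝ) < 1 + ρ := by linarith
  set Nx : ℝ := (x0^(1+ρ)+x1^(1+ρ))/2 with hNxdef
  set Ny : ℝ := (y0^(1+ρ)+y1^(1+ρ))/2 with hNydef
  have hNx : 0 ≤ Nx := by
    have := Real.rpow_nonneg hx0 (1+ρ); have := Real.rpow_nonneg hx1 (1+ρ)
    rw [hNxdef]; linarith
  have hNy : 0 ≤ Ny := by
    have := Real.rpow_nonneg hy0 (1+ρ); have := Real.rpow_nonneg hy1 (1+ρ)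
    rw [hNydef]; linarith
  have hB : 0 ≤ Nx * Ny := mul_nonneg hNx hNy
  set L : ℝ := (1+ρ)/2 * ((x0*y0 + x1*y1)/2) + (1-ρ)/2 * ((x0*y1 + x1*y0)/2) with hLdef
  set R : ℝ := (Nx * Ny) ^ (1/(1+ρ)) with hRdef
  have hR : 0 ≤ R := Real.rpow_nonneg hB _
  rcases le_or_gt L 0 with hL | hL
  · exact hL.trans hR
  · have hQx := two_point_single hρ0 hρ1 hx0 hx1
    have hQy := two_point_single hρ0 hρ1 hy0 hy1
    have hQynn : 0 ≤ ((y0+y1)/2)^2 + ρ*((y0-y1)/2)^2 :=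
      add_nonneg (sq_nonneg _) (mul_nonneg hρ0 (sq_nonneg _))
    have hc : L^2 ≤ (((x0+x1)/2)^2 + ρ*((x0-x1)/2)^2) * (((y0+y1)/2)^2 + ρ*((y0-y1)/2)^2) := by
      rw [hLdef]
      nlinarith [mul_nonneg hρ0 (sq_nonneg ((x0+x1)/2*((y0-y1)/2) - (y0+y1)/2*((x0-x1)/2)))]
    have hsq : L^2 ≤ (Nx*Ny)^(2/(1+ρ)) := by
      calc L^2 ≤ _ := hc
      _ ≤ Nx^(2/(1+ρ)) * Ny^(2/(1+ρ)) :=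
        mul_le_mul hQx hQy hQynn (Real.rpow_nonneg hNx _)
      _ = (Nx*Ny)^(2/(1+ρ)) := (Real.mul_rpow hNx hNy).symm
    have hR2 : R^2 = (Nx*Ny)^(2/(1+ρ)) := by
      rw [hRdef, ← Real.rpow_natCast ((Nx*Ny)^(1/(1+ρ))) 2, ← Real.rpow_mul hB]
      congr 1
      push_cast
      ring
    have hsq2 : L^2 ≤ R^2 := by rw [hR2]; exact hsq
    have h := Real.sqrt_le_sqrt hsq2
    rwa [Real.sqrt_sq hL.le, Real.sqrt_sq hR] at h

private noncomputable def W (ρ : ℝ) (a b : Bool) : ℝ := if a = b then (1+ρ)/2 else (1-ρ)/2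

private def sliceF {d : ℕ} (A : Finset (Fin (d+1) → Bool)) (b : Bool) :
    Finset (Fin d → Bool) :=
  Finset.univ.filter (fun z => Fin.cons b z ∈ A)

private lemma sum_cons_slice {d : ℕ} (A : Finset (Fin (d+1) → Bool)) (F : (Fin (d+1) → Bool) → ℝ) :
    ∑ x ∈ A, F x = ∑ b : Bool, ∑ z ∈ sliceF A b, F (Fin.cons b z) := by
  classical
  have h1 : ∑ x ∈ A, F x = ∑ x : Fin (d+1) → Bool, if x ∈ A then F x else 0 := by
    rw [Finset.sum_ite_mem, Finset.univ_inter]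
  rw [h1, ← (Fin.consEquiv (fun _ => Bool)).sum_comp (fun x => if x ∈ A then F x else 0),
    Fintype.sum_prod_type]
  apply Finset.sum_congr rfl; intro b _
  rw [sliceF, Finset.sum_filter]
  apply Finset.sum_congr rfl; intro z _
  simp [Fin.consEquiv]
  exact if_congr Iff.rfl rfl rfl

private lemma card_slice {d : ℕ} (A : Finset (Fin (d+1) → Bool)) :
    (A.card : ℝ) = ((sliceF A true).card : ℝ) + ((sliceF A false).card : ℝ) := by
  have h := sum_cons_slice A (fun _ => (1:ℝ))
  simpa [Finset.sum_const, nsmul_eq_mul, Fintype.sum_bool] using h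

private lemma split_sum {ρ : ℝ} {d : ℕ} (A B : Finset (Fin (d+1) → Bool)) :
    (∑ x ∈ A, ∑ y ∈ B, ∏ i, W ρ (x i) (y i))
      = ∑ b : Bool, ∑ b' : Bool, W ρ b b' *
          ∑ z ∈ sliceF A b, ∑ z' ∈ sliceF B b', ∏ i : Fin d, W ρ (z i) (z' i) := by
  rw [sum_cons_slice A (fun x => ∑ y ∈ B, ∏ i, W ρ (x i) (y i))]
  refine Finset.sum_congr rfl fun b _ => ?_
  have hz : ∀ z : Fin d → Bool, (∑ y ∈ B, ∏ i, W ρ (Fin.cons (α := fun _ => Bool) b z i) (y i))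
      = ∑ b' : Bool, ∑ z' ∈ sliceF B b', W ρ b b' * ∏ i : Fin d, W ρ (z i) (z' i) := by
    intro z
    rw [sum_cons_slice B (fun y => ∏ i, W ρ (Fin.cons (α := fun _ => Bool) b z i) (y i))]
    refine Finset.sum_congr rfl fun b' _ => Finset.sum_congr rfl fun z' _ => ?_
    rw [Fin.prod_univ_succ]
    simp
  rw [Finset.sum_congr rfl (fun z _ => hz z), Finset.sum_comm]
  refine Finset.sum_congr rfl fun b' _ => ?_
  rw [Finset.mul_sum]
  exact Finset.sum_congr rfl fun z _ => (Finset.mul_sum _ _ _).symm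

private lemma key_ind (ρ : ℝ) (hρ0 : 0 ≤ ρ) (hρ1 : ρ ≤ 1) (d : ℕ)
    (A B : Finset (Fin d → Bool)) :
    (∑ x ∈ A, ∑ y ∈ B, ∏ i, W ρ (x i) (y i)) ≤
      2^d * (((A.card : ℝ)/2^d) * ((B.card : ℝ)/2^d)) ^ (1/(1+ρ)) := by
  classical
  have hppos : (0:ℝ) < 1+ρ := by linarith
  induction d with
  | zero =>
    have h1 : (∑ x ∈ A, ∑ y ∈ B, ∏ i : Fin 0, W ρ (x i) (y i))
        = (A.card : ℝ) * B.card := by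
      simp [Finset.sum_const, nsmul_eq_mul]
    have hcard1 : Fintype.card (Fin 0 → Bool) = 1 := by simp
    have hA1 : A.card ≤ 1 := hcard1 ▸ Finset.card_le_univ A
    have hB1 : B.card ≤ 1 := hcard1 ▸ Finset.card_le_univ B
    rw [h1]
    rcases Nat.le_one_iff_eq_zero_or_eq_one.mp hA1 with hA | hA <;>
      rcases Nat.le_one_iff_eq_zero_or_eq_one.mp hB1 with hB | hB <;>
      rw [hA, hB] <;> simp [Real.one_rpow] <;> positivity
  | succ d ih =>
    have hwnn : ∀ b b', 0 ≤ W ρ b b' := by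
      intro b b'; rw [W]; split <;> linarith
    have hcAnn : ∀ b, (0:ℝ) ≤ ((sliceF A b).card : ℝ)/2^d := fun b => by positivity
    have hcBnn : ∀ b, (0:ℝ) ≤ ((sliceF B b).card : ℝ)/2^d := fun b => by positivity
    have hbound : (∑ b : Bool, ∑ b' : Bool, W ρ b b' *
            ∑ z ∈ sliceF A b, ∑ z' ∈ sliceF B b', ∏ i : Fin d, W ρ (z i) (z' i))
        ≤ ∑ b : Bool, ∑ b' : Bool, W ρ b b' *
            (2^d * ((((sliceF A b).card : ℝ)/2^d) * (((sliceF B b').card : ℝ)/2^d)) ^ (1/(1+ρ))) := by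
      apply Finset.sum_le_sum; intro b _
      apply Finset.sum_le_sum; intro b' _
      exact mul_le_mul_of_nonneg_left (ih (sliceF A b) (sliceF B b')) (hwnn b b')
    set x0 : ℝ := (((sliceF A false).card : ℝ)/2^d) ^ (1/(1+ρ)) with hx0def
    set x1 : ℝ := (((sliceF A true).card : ℝ)/2^d) ^ (1/(1+ρ)) with hx1def
    set y0 : ℝ := (((sliceF B false).card : ℝ)/2^d) ^ (1/(1+ρ)) with hy0def
    set y1 : ℝ := (((sliceF B true).card : ℝ)/2^d) ^ (1/(1+ρ)) with hy1def
    have hx0 : (0:ℝ) ≤ x0 := Real.rpow_nonneg (hcAnn false) _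
    have hx1 : (0:ℝ) ≤ x1 := Real.rpow_nonneg (hcAnn true) _
    have hy0 : (0:ℝ) ≤ y0 := Real.rpow_nonneg (hcBnn false) _
    have hy1 : (0:ℝ) ≤ y1 := Real.rpow_nonneg (hcBnn true) _
    have htp := two_point hρ0 hρ1 hx0 hx1 hy0 hy1
    have hback : ∀ (c : ℝ), 0 ≤ c → (c ^ (1/(1+ρ))) ^ (1+ρ) = c := by
      intro c hc
      rw [← Real.rpow_mul hc]
      have h : 1/(1+ρ) * (1+ρ) = 1 := by field_simp
      rw [h, Real.rpow_one]
    rw [hx0def, hx1def, hy0def, hy1def] at htp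
    rw [hback _ (hcAnn false), hback _ (hcAnn true), hback _ (hcBnn false),
      hback _ (hcBnn true)] at htp
    rw [← hx0def, ← hx1def, ← hy0def, ← hy1def] at htp
    have hmulr : ∀ (u v : ℝ), 0 ≤ u → 0 ≤ v →
        (u * v) ^ (1/(1+ρ)) = u ^ (1/(1+ρ)) * v ^ (1/(1+ρ)) :=
      fun u v hu hv => Real.mul_rpow hu hv
    have hA2 : ((((sliceF A false).card : ℝ)/2^d) + (((sliceF A true).card : ℝ)/2^d))/2
        = (A.card : ℝ)/2^(d+1) := by
      rw [card_slice A, pow_succ]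
      field_simp
      ring
    have hB2 : ((((sliceF B false).card : ℝ)/2^d) + (((sliceF B true).card : ℝ)/2^d))/2
        = (B.card : ℝ)/2^(d+1) := by
      rw [card_slice B, pow_succ]
      field_simp
      ring
    calc (∑ x ∈ A, ∑ y ∈ B, ∏ i, W ρ (x i) (y i))
        = ∑ b : Bool, ∑ b' : Bool, W ρ b b' *
            ∑ z ∈ sliceF A b, ∑ z' ∈ sliceF B b', ∏ i : Fin d, W ρ (z i) (z' i) := split_sum A B
    _ ≤ ∑ b : Bool, ∑ b' : Bool, W ρ b b' *
            (2^d * ((((sliceF A b).card : ℝ)/2^d) * (((sliceF B b').card : ℝ)/2^d)) ^ (1/(1+ρ))) := hbound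
    _ = 2^(d+1) * ((1+ρ)/2 * ((x0*y0 + x1*y1)/2) + (1-ρ)/2 * ((x0*y1 + x1*y0)/2)) := by
        rw [Fintype.sum_bool, Fintype.sum_bool, Fintype.sum_bool]
        rw [hmulr _ _ (hcAnn true) (hcBnn true), hmulr _ _ (hcAnn true) (hcBnn false),
          hmulr _ _ (hcAnn false) (hcBnn true), hmulr _ _ (hcAnn false) (hcBnn false)]
        have h1 : W ρ true true = (1+ρ)/2 := by rw [W]; norm_num
        have h2 : W ρ false false = (1+ρ)/2 := by rw [W]; norm_num
        have h3 : W ρ true false = (1-ρ)/2 := by rw [W]; norm_num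
        have h4 : W ρ false true = (1-ρ)/2 := by rw [W]; norm_num
        rw [h1, h2, h3, h4, pow_succ, ← hx0def, ← hx1def, ← hy0def, ← hy1def]
        ring
    _ ≤ 2^(d+1) * (((((sliceF A false).card : ℝ)/2^d + ((sliceF A true).card : ℝ)/2^d)/2) *
          ((((sliceF B false).card : ℝ)/2^d + ((sliceF B true).card : ℝ)/2^d)/2)) ^ (1/(1+ρ)) := by
        apply mul_le_mul_of_nonneg_left htp (by positivity)
    _ = 2^(d+1) * (((A.card : ℝ)/2^(d+1)) * ((B.card : ℝ)/2^(d+1))) ^ (1/(1+ρ)) := by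
        rw [hA2, hB2]

/-- Small-Set Expansion theorem: for `X` uniform on `{0,1}^d` and `X'` a
`ρ`-correlated copy (each bit flipped independently with probability
`(1-ρ)/2`), for any `A ⊆ {0,1}^d`,
`Pr[X ∈ A ∧ X' ∈ A] ≤ (|A|·2^{-d})^{2/(1+ρ)}`. -/
theorem small_set_expansion (d : ℕ) (ρ : ℝ) (hρ0 : 0 ≤ ρ) (hρ1 : ρ ≤ 1)
    (p : (Fin d → Bool) × (Fin d → Bool) → ℝ)
    (hp : ∀ xy, p xy = (1 / 2 ^ d) *
        ∏ i, (if xy.1 i = xy.2 i then (1 + ρ) / 2 else (1 - ρ) / 2))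
    (A : Finset (Fin d → Bool)) :
    prEvent p (fun ω => ω.1 ∈ A ∧ ω.2 ∈ A) ≤
      ((A.card : ℝ) * (2 : ℝ) ^ (-(d : ℝ))) ^ (2 / (1 + ρ)) := by
  classical
  have hppos : (0:ℝ) < 1 + ρ := by linarith
  have h1 : prEvent p (fun ω => ω.1 ∈ A ∧ ω.2 ∈ A) = ∑ x ∈ A, ∑ y ∈ A, p (x, y) := by
    rw [prEvent]
    rw [Fintype.sum_prod_type]
    refine Eq.trans (?_ : _ = ∑ x : Fin d → Bool, if x ∈ A then ∑ y ∈ A, p (x, y) else 0) ?_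
    · refine Finset.sum_congr rfl fun x _ => ?_
      by_cases hx : x ∈ A
      · simp [hx, Finset.sum_ite_mem]
      · simp [hx]
    · simp [Finset.sum_ite_mem]
  calc prEvent p (fun ω => ω.1 ∈ A ∧ ω.2 ∈ A)
      = ∑ x ∈ A, ∑ y ∈ A, p (x, y) := h1
  _ = (1/2^d : ℝ) * ∑ x ∈ A, ∑ y ∈ A, ∏ i, W ρ (x i) (y i) := by
      rw [Finset.mul_sum]
      refine Finset.sum_congr rfl fun x _ => ?_
      rw [Finset.mul_sum]
      refine Finset.sum_congr rfl fun y _ => ?_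
      rw [hp (x, y)]
      congr 1
  _ ≤ (1/2^d : ℝ) * (2^d * (((A.card : ℝ)/2^d) * ((A.card : ℝ)/2^d)) ^ (1/(1+ρ))) := by
      apply mul_le_mul_of_nonneg_left (key_ind ρ hρ0 hρ1 d A A) (by positivity)
  _ = (((A.card : ℝ)/2^d) * ((A.card : ℝ)/2^d)) ^ (1/(1+ρ)) := by
      field_simp
  _ = ((A.card : ℝ) * (2 : ℝ) ^ (-(d : ℝ))) ^ (2 / (1 + ρ)) := by
      have hα : (0:ℝ) ≤ (A.card : ℝ)/2^d := by positivity
      rw [show ((A.card : ℝ)/2^d) * ((A.card : ℝ)/2^d) = ((A.card : ℝ)/2^d)^2 by ring]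
      rw [← Real.rpow_natCast ((A.card : ℝ)/2^d) 2, ← Real.rpow_mul hα]
      rw [show ((2:ℕ):ℝ) * (1/(1+ρ)) = 2/(1+ρ) by push_cast; ring]
      congr 1
      rw [Real.rpow_neg (by norm_num) (d:ℝ), Real.rpow_natCast, div_eq_mul_inv]
end

section
/- Let J be uniform on [k], independent of M, and let Z be a random variable such that Z is independent of J marginally. Then I(J; M,Z) ≤ E_j[I(M; Z | J = j)], i.e., the mutual information between J and the pair (M,Z) is at most the average over j of the conditional mutual information between M and Z given J = j. -/
open Finset Real Filter
open scoped Classical Topology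

section Aux

variable {Ω : Type*} [Fintype Ω]

lemma prEvent_nonneg (p : Ω → ℝ) (hp0 : ∀ ω, 0 ≤ p ω) (s : Ω → Prop) :
    0 ≤ prEvent p s := by
  refine Finset.sum_nonneg fun ω _ => ?_
  by_cases h : s ω <;> simp [h, hp0 ω]

lemma prEvent_mono (p : Ω → ℝ) (hp0 : ∀ ω, 0 ≤ p ω) (s t : Ω → Prop)
    (hst : ∀ ω, s ω → t ω) : prEvent p s ≤ prEvent p t := by
  refine Finset.sum_le_sum fun ω _ => ?_
  by_cases h : s ω
  · simp [h, hst ω h]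
  · by_cases h' : t ω <;> simp [h, h', hp0 ω]

lemma sum_prEq {α : Type*} [Fintype α] (p : Ω → ℝ) (X : Ω → α) :
    ∑ x, prEq p X x = ∑ ω, p ω := by
  unfold prEq prEvent
  rw [Finset.sum_comm]
  simp

lemma prEq_pair {α β : Type*} [Fintype α] [Fintype β] (p : Ω → ℝ) (X : Ω → α)
    (Y : Ω → β) (x : α) (y : β) :
    prEq p (fun ω => (X ω, Y ω)) (x, y) = prEvent p (fun ω => X ω = x ∧ Y ω = y) := by
  unfold prEq prEvent
  refine Finset.sum_congr rfl fun ω _ => ?_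
  simp [Prod.ext_iff]

lemma prEq_cond {γ α : Type*} [Fintype α] (p : Ω → ℝ) (W : Ω → γ) (w : γ)
    (X : Ω → α) (x : α) :
    prEq (condPMF p (fun ω => W ω = w)) X x
      = prEvent p (fun ω => W ω = w ∧ X ω = x) / prEq p W w := by
  unfold prEq condPMF prEvent
  rw [Finset.sum_div]
  refine Finset.sum_congr rfl fun ω _ => ?_
  by_cases hs : W ω = w <;> by_cases hx : X ω = x <;> simp [hs, hx]

lemma sum_prEq_cond {γ α : Type*} [Fintype α] (p : Ω → ℝ) (W : Ω → γ) (w : γ)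
    (X : Ω → α) (h0 : prEq p W w ≠ 0) :
    ∑ x, prEq (condPMF p (fun ω => W ω = w)) X x = 1 := by
  rw [sum_prEq]
  unfold condPMF
  rw [← Finset.sum_div]
  unfold prEq prEvent at h0
  exact div_self h0

lemma entropy_eq_of_prEq {α : Type*} [Fintype α] {p q : Ω → ℝ} {X Y : Ω → α}
    (h : ∀ x, prEq p X x = prEq q Y x) : entropy p X = entropy q Y := by
  unfold entropy
  congr 1
  exact Finset.sum_congr rfl fun x _ => by rw [h]

lemma mul_logb_mul (a b : ℝ) :
    a * b * Real.logb 2 (a * b) = a * b * Real.logb 2 a + a * b * Real.logb 2 b := by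
  rcases eq_or_ne a 0 with ha | ha
  · simp [ha]
  rcases eq_or_ne b 0 with hb | hb
  · simp [hb]
  rw [Real.logb_mul ha hb]
  ring

/-- Chain rule for entropy of a pair. -/
lemma entropy_pair_eq {γ α : Type*} [Fintype γ] [Fintype α] (p : Ω → ℝ)
    (hp0 : ∀ ω, 0 ≤ p ω) (W : Ω → γ) (X : Ω → α) :
    entropy p (fun ω => (W ω, X ω)) =
      entropy p W + ∑ w, prEq p W w * entropy (condPMF p (fun ω => W ω = w)) X := by
  have key : ∀ w x, prEq p (fun ω => (W ω, X ω)) (w, x)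
      = prEq p W w * prEq (condPMF p (fun ω => W ω = w)) X x := by
    intro w x
    rw [prEq_pair, prEq_cond]
    rcases eq_or_ne (prEq p W w) 0 with h0 | h0
    · have hle : prEvent p (fun ω => W ω = w ∧ X ω = x) ≤ prEq p W w :=
        prEvent_mono p hp0 _ _ fun ω h => h.1
      have hge : (0:ℝ) ≤ prEvent p (fun ω => W ω = w ∧ X ω = x) :=
        prEvent_nonneg p hp0 _
      rw [le_antisymm (h0 ▸ hle) hge, h0]
      simp
    · rw [mul_comm, div_mul_cancel₀ _ h0]
  unfold entropy
  rw [Fintype.sum_prod_type]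
  have step : ∀ w, ∑ x, prEq p (fun ω => (W ω, X ω)) (w, x)
        * Real.logb 2 (prEq p (fun ω => (W ω, X ω)) (w, x))
      = prEq p W w * Real.logb 2 (prEq p W w)
        + prEq p W w * ∑ x, prEq (condPMF p (fun ω => W ω = w)) X x
          * Real.logb 2 (prEq (condPMF p (fun ω => W ω = w)) X x) := by
    intro w
    rcases eq_or_ne (prEq p W w) 0 with h0 | h0
    · have hz : ∀ x, prEq p (fun ω => (W ω, X ω)) (w, x) = 0 := fun x => by
        rw [key, h0, zero_mul]
      simp [hz, h0]
    · have hq1 : ∑ x, prEq (condPMF p (fun ω => W ω = w)) X x = 1 :=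
        sum_prEq_cond p W w X h0
      calc ∑ x, prEq p (fun ω => (W ω, X ω)) (w, x)
              * Real.logb 2 (prEq p (fun ω => (W ω, X ω)) (w, x))
          = ∑ x, ((prEq p W w * Real.logb 2 (prEq p W w))
                * prEq (condPMF p (fun ω => W ω = w)) X x
              + prEq p W w * (prEq (condPMF p (fun ω => W ω = w)) X x
                * Real.logb 2 (prEq (condPMF p (fun ω => W ω = w)) X x))) := by
            refine Finset.sum_congr rfl fun x _ => ?_
            rw [key]
            have := mul_logb_mul (prEq p W w) (prEq (condPMF p (fun ω => W ω = w)) X x)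
            linarith [this]
        _ = _ := by
            rw [Finset.sum_add_distrib, ← Finset.mul_sum, hq1, mul_one, ← Finset.mul_sum]
  rw [Finset.sum_congr rfl fun w _ => step w, Finset.sum_add_distrib, neg_add]
  congr 1
  rw [← Finset.sum_neg_distrib]
  exact Finset.sum_congr rfl fun w _ => by ring

lemma sum_prEq_pair_right {α β : Type*} [Fintype α] [Fintype β] (p : Ω → ℝ)
    (X : Ω → α) (Y : Ω → β) (x : α) :
    ∑ y, prEq p (fun ω => (X ω, Y ω)) (x, y) = prEq p X x := by
  unfold prEq prEvent
  rw [Finset.sum_comm]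
  refine Finset.sum_congr rfl fun ω _ => ?_
  by_cases hX : X ω = x <;> simp [Prod.ext_iff, hX]

lemma sum_prEq_pair_left {α β : Type*} [Fintype α] [Fintype β] (p : Ω → ℝ)
    (X : Ω → α) (Y : Ω → β) (y : β) :
    ∑ x, prEq p (fun ω => (X ω, Y ω)) (x, y) = prEq p Y y := by
  unfold prEq prEvent
  rw [Finset.sum_comm]
  refine Finset.sum_congr rfl fun ω _ => ?_
  by_cases hY : Y ω = y <;> simp [Prod.ext_iff, hY]

/-- Key analytic lemma: subadditivity of entropy for a nonnegative matrix. -/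
lemma matrix_subadd {α β : Type*} [Fintype α] [Fintype β]
    (c : α → β → ℝ) (hc : ∀ x y, 0 ≤ c x y) (h1 : ∑ x, ∑ y, c x y = 1) :
    ∑ x, (∑ y, c x y) * Real.logb 2 (∑ y, c x y)
      + ∑ y, (∑ x, c x y) * Real.logb 2 (∑ x, c x y)
      ≤ ∑ x, ∑ y, c x y * Real.logb 2 (c x y) := by
  have hb1 : ∑ y, ∑ x, c x y = 1 := by rw [Finset.sum_comm]; exact h1
  have ha0 : ∀ x, 0 ≤ ∑ y, c x y := fun x => Finset.sum_nonneg fun y _ => hc x y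
  have hb0 : ∀ y, 0 ≤ ∑ x, c x y := fun y => Finset.sum_nonneg fun x _ => hc x y
  have hca : ∀ x y, c x y ≤ ∑ y', c x y' := fun x y =>
    Finset.single_le_sum (fun y' _ => hc x y') (Finset.mem_univ y)
  have hcb : ∀ x y, c x y ≤ ∑ x', c x' y := fun x y =>
    Finset.single_le_sum (fun x' _ => hc x' y) (Finset.mem_univ x)
  have key : ∑ x, ∑ y, c x y * (Real.log (∑ y', c x y') + Real.log (∑ x', c x' y)
      - Real.log (c x y)) ≤ 0 := by
    have hb : ∀ x y, c x y * (Real.log (∑ y', c x y') + Real.log (∑ x', c x' y)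
        - Real.log (c x y)) ≤ (∑ y', c x y') * (∑ x', c x' y) - c x y := by
      intro x y
      rcases eq_or_lt_of_le (hc x y) with h | h
      · rw [← h]
        simp only [zero_mul, sub_zero]
        exact mul_nonneg (ha0 x) (hb0 y)
      · have hax : 0 < ∑ y', c x y' := lt_of_lt_of_le h (hca x y)
        have hby : 0 < ∑ x', c x' y := lt_of_lt_of_le h (hcb x y)
        have heq : Real.log (∑ y', c x y') + Real.log (∑ x', c x' y) - Real.log (c x y)
            = Real.log ((∑ y', c x y') * (∑ x', c x' y) / c x y) := by
          rw [Real.log_div (by positivity) h.ne', Real.log_mul hax.ne' hby.ne']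
        rw [heq]
        have hlog := Real.log_le_sub_one_of_pos
          (show (0:ℝ) < (∑ y', c x y') * (∑ x', c x' y) / c x y by positivity)
        calc c x y * Real.log ((∑ y', c x y') * (∑ x', c x' y) / c x y)
            ≤ c x y * ((∑ y', c x y') * (∑ x', c x' y) / c x y - 1) :=
              mul_le_mul_of_nonneg_left hlog h.le
          _ = (∑ y', c x y') * (∑ x', c x' y) - c x y := by
              field_simp
    calc ∑ x, ∑ y, c x y * (Real.log (∑ y', c x y') + Real.log (∑ x', c x' y)
            - Real.log (c x y))
        ≤ ∑ x, ∑ y, ((∑ y', c x y') * (∑ x', c x' y) - c x y) :=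
          Finset.sum_le_sum fun x _ => Finset.sum_le_sum fun y _ => hb x y
      _ = 0 := by
          have hprod : ∑ x, ∑ y, (∑ y', c x y') * (∑ x', c x' y) = 1 := by
            calc ∑ x, ∑ y, (∑ y', c x y') * (∑ x', c x' y)
                = ∑ x, (∑ y', c x y') * (∑ y, ∑ x', c x' y) :=
                  Finset.sum_congr rfl fun x _ => (Finset.mul_sum _ _ _).symm
              _ = 1 := by
                  rw [Finset.sum_congr rfl fun x _ => by rw [hb1, mul_one]]
                  exact h1
          simp only [Finset.sum_sub_distrib]
          rw [hprod, h1]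
          ring
  have e1 : ∑ x, (∑ y, c x y) * Real.logb 2 (∑ y, c x y)
      = ∑ x, ∑ y, c x y * Real.logb 2 (∑ y', c x y') :=
    Finset.sum_congr rfl fun x _ => Finset.sum_mul _ _ _
  have e2 : ∑ y, (∑ x, c x y) * Real.logb 2 (∑ x, c x y)
      = ∑ x, ∑ y, c x y * Real.logb 2 (∑ x', c x' y) := by
    rw [Finset.sum_congr rfl fun y (_ : y ∈ Finset.univ) =>
      (Finset.sum_mul Finset.univ (fun x => c x y) (Real.logb 2 (∑ x, c x y)))]
    exact Finset.sum_comm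
  rw [e1, e2]
  have hcomb : (∑ x, ∑ y, c x y * Real.logb 2 (∑ y', c x y'))
      + (∑ x, ∑ y, c x y * Real.logb 2 (∑ x', c x' y))
      - (∑ x, ∑ y, c x y * Real.logb 2 (c x y))
      = (∑ x, ∑ y, c x y * (Real.log (∑ y', c x y') + Real.log (∑ x', c x' y)
          - Real.log (c x y))) / Real.log 2 := by
    rw [Finset.sum_div, ← Finset.sum_add_distrib, ← Finset.sum_sub_distrib]
    refine Finset.sum_congr rfl fun x _ => ?_
    rw [Finset.sum_div, ← Finset.sum_add_distrib, ← Finset.sum_sub_distrib]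
    refine Finset.sum_congr rfl fun y _ => ?_
    simp only [← Real.log_div_log]
    ring
  have hdiv : (∑ x, ∑ y, c x y * (Real.log (∑ y', c x y') + Real.log (∑ x', c x' y)
      - Real.log (c x y))) / Real.log 2 ≤ 0 :=
    div_nonpos_of_nonpos_of_nonneg key (Real.log_nonneg one_le_two)
  linarith [hcomb, hdiv]

/-- Subadditivity of entropy. -/
lemma entropy_pair_le {α β : Type*} [Fintype α] [Fintype β] (p : Ω → ℝ)
    (hp0 : ∀ ω, 0 ≤ p ω) (hp1 : ∑ ω, p ω = 1) (X : Ω → α) (Y : Ω → β) :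
    entropy p (fun ω => (X ω, Y ω)) ≤ entropy p X + entropy p Y := by
  have hc : ∀ x y, 0 ≤ prEq p (fun ω => (X ω, Y ω)) (x, y) := fun x y =>
    prEvent_nonneg p hp0 _
  have h1 : ∑ x, ∑ y, prEq p (fun ω => (X ω, Y ω)) (x, y) = 1 := by
    rw [Finset.sum_congr rfl fun x _ => sum_prEq_pair_right p X Y x, sum_prEq, hp1]
  have hm := matrix_subadd (fun x y => prEq p (fun ω => (X ω, Y ω)) (x, y)) hc h1
  simp only [sum_prEq_pair_right, sum_prEq_pair_left] at hm
  unfold entropy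
  rw [Fintype.sum_prod_type]
  linarith [hm]

end Aux


/-- If `J` is uniform on `[k]`, `M ⟂ J`, and `Z ⟂ J`, then
`I(J; M,Z) ≤ E_j[I(M; Z | J = j)]`. -/
theorem mutInfo_pair_le_condMutInfo {Ω γm γz : Type*} [Fintype Ω] [Fintype γm]
    [Fintype γz] (k : ℕ) (hk : 0 < k)
    (p : Ω → ℝ) (hp : IsPMF p)
    (J : Ω → Fin k) (M : Ω → γm) (Z : Ω → γz)
    (hunif : ∀ j, prEq p J j = 1 / k)
    (hMJ : ∀ (j : Fin k) (m : γm),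
      prEvent p (fun ω => J ω = j ∧ M ω = m) = prEq p J j * prEq p M m)
    (hZJ : ∀ (j : Fin k) (z : γz),
      prEvent p (fun ω => J ω = j ∧ Z ω = z) = prEq p J j * prEq p Z z) :
    mutInfo p J (fun ω => (M ω, Z ω)) ≤ condMutInfo p M Z J := by
  obtain ⟨hp0, hp1⟩ := hp
  have hkR : (k : ℝ) ≠ 0 := Nat.cast_ne_zero.mpr hk.ne'
  have hpj : ∀ j, prEq p J j ≠ 0 := by
    intro j
    rw [hunif]
    positivity
  have hM : ∀ j, entropy (condPMF p (fun ω => J ω = j)) M = entropy p M := by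
    intro j
    refine entropy_eq_of_prEq fun m => ?_
    rw [prEq_cond, hMJ, mul_comm, mul_div_assoc, div_self (hpj j), mul_one]
  have hZ : ∀ j, entropy (condPMF p (fun ω => J ω = j)) Z = entropy p Z := by
    intro j
    refine entropy_eq_of_prEq fun z => ?_
    rw [prEq_cond, hZJ, mul_comm, mul_div_assoc, div_self (hpj j), mul_one]
  have hsumJ : ∑ j : Fin k, prEq p J j = 1 := by
    simp only [hunif]
    rw [Finset.sum_const, Finset.card_univ, Fintype.card_fin, nsmul_eq_mul]
    field_simp
  have chain := entropy_pair_eq p hp0 J (fun ω => (M ω, Z ω))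
  have sub := entropy_pair_le p hp0 hp1 M Z
  unfold mutInfo condMutInfo mutInfo
  simp only [hM, hZ]
  rw [chain]
  have hrw : ∑ j, prEq p J j * (entropy p M + entropy p Z
        - entropy (condPMF p (fun ω => J ω = j)) (fun ω => (M ω, Z ω)))
      = (entropy p M + entropy p Z)
        - ∑ j, prEq p J j * entropy (condPMF p (fun ω => J ω = j)) (fun ω => (M ω, Z ω)) := by
    rw [Finset.sum_congr rfl fun j (_ : j ∈ Finset.univ) => mul_sub (prEq p J j)
      (entropy p M + entropy p Z)
      (entropy (condPMF p (fun ω => J ω = j)) (fun ω => (M ω, Z ω))),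
      Finset.sum_sub_distrib, ← Finset.sum_mul, hsumJ, one_mul]
  rw [hrw]
  linarith [sub]
end
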